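/- arXiv:0705.2649 — 2 statements merged into one kernel-verified Lean document; each statement's English description precedes it below -/
import Mathlib

section
/- Let m, M with 0 < m ≤ M < 1 and an integer q ≥ 1 satisfy M^{q+1} < m. Let A : ℂ^k → ℂ^k be an invertible linear map with m|v| ≤ |A v| ≤ M|v| for all v. Let F : B(0,r) → ℂ^k be holomorphic with F(0) = 0, tangent to A at order q+1 (i.e. the Taylor expansions of F and A agree up to degree q), and with all Taylor coefficients of F bounded by a constant C. Then the sequence T_n := A^{-n} ∘ F^n converges uniformly on a sufficiently small ball B(0,ρ) to a holomorphic map T with T(0) = 0 and d_0 T = Id satisfying T ∘ F = A ∘ T near 0; moreover |T(v) − v| ≤ C' |v|^{q+1} on B(0,ρ) for some constant C'. -/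
/-!
Put `Tₙ = A⁻ⁿ ∘ Fⁿ`. Tangency gives `‖F v - A v‖ ≤ c ‖v‖^(q+1)` near `0`, so on a small ball `F`
contracts by a factor `κ` with `M < κ < 1` and `κ^(q+1) < m`. Since
`Tₙ₊₁ - Tₙ = A⁻⁽ⁿ⁺¹⁾ ∘ (F - A) ∘ Fⁿ`, the increments are bounded by `(c/m) θⁿ ‖v‖^(q+1)` with
`θ = κ^(q+1)/m < 1`. The telescoping series therefore converges uniformly; by Cauchy estimates
its derivatives converge too, so the limit `T` is holomorphic. Summing the increments gives
`‖T v - v‖ ≤ C' ‖v‖^(q+1)`, hence `d₀T = Id`, and `Tₙ ∘ F = A ∘ Tₙ₊₁` passes to the limit.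
-/

open Metric Filter Set Asymptotics Topology

theorem differentiableOn_tsum_of_summable_norm {ι E G : Type*} [NormedAddCommGroup E]
    [NormedSpace ℂ E] [NormedAddCommGroup G] [NormedSpace ℂ G] [CompleteSpace G]
    {g : ι → E → G} {u : ι → ℝ}
    {U : Set E} (hu : Summable u) (hg : ∀ i, DifferentiableOn ℂ (g i) U) (hU : IsOpen U)
    (hg_le : ∀ i, ∀ w ∈ U, ‖g i w‖ ≤ u i) :
    DifferentiableOn ℂ (fun w => ∑' i, g i w) U := by
  intro x hx
  obtain ⟨ε, hε, hxU⟩ := Metric.isOpen_iff.mp hU x hx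
  have hball : ∀ y ∈ ball x (ε / 2), ball y (ε / 2) ⊆ ball x ε := fun y hy =>
    ball_subset_ball' (by linarith [mem_ball.mp hy])
  -- Cauchy estimate via the Schwarz lemma: `g i` maps `ball y (ε / 2)` into
  -- `closedBall (g i y) (2 * u i)`.
  have hderiv : ∀ i, ∀ y ∈ ball x (ε / 2), ‖fderiv ℂ (g i) y‖ ≤ 2 * u i / (ε / 2) := by
    intro i y hy
    have hyU : ball y (ε / 2) ⊆ U := (hball y hy).trans hxU
    refine Complex.norm_fderiv_le_div_of_mapsTo_ball ((hg i).mono hyU) (fun z hz => ?_)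
      (by positivity)
    rw [mem_closedBall, dist_eq_norm]
    linarith [norm_sub_le (g i z) (g i y), hg_le i z (hyU hz), hg_le i y (hyU (mem_ball_self
      (by positivity)))]
  have hsmall : ball x (ε / 2) ⊆ U := (ball_subset_ball (by linarith)).trans hxU
  refine (hasFDerivAt_tsum_of_isPreconnected (hu.mul_left 2 |>.div_const (ε / 2)) isOpen_ball
    (convex_ball x _).isPreconnected
    (fun i y hy => ((hg i).differentiableAt (hU.mem_nhds (hsmall hy))).hasFDerivAt) hderiv
    (mem_ball_self (by positivity)) (.of_norm_bounded hu fun i => hg_le i x hx)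
    (mem_ball_self (by positivity))).differentiableAt.differentiableWithinAt

theorem tendstoUniformlyOn_add_tsum_sub {α G : Type*} [NormedAddCommGroup G] [CompleteSpace G]
    {u : ℕ → α → G} {a : ℕ → ℝ} {s : Set α} (ha : Summable a)
    (hu : ∀ n, ∀ x ∈ s, ‖u (n + 1) x - u n x‖ ≤ a n) :
    TendstoUniformlyOn u (fun x => u 0 x + ∑' n, (u (n + 1) x - u n x)) atTop s := by
  have h := tendstoUniformlyOn_tsum_nat ha hu
  rw [Metric.tendstoUniformlyOn_iff] at h ⊢
  intro ε hε
  filter_upwards [h ε hε] with N hN x hx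
  rw [← add_sub_cancel (u 0 x) (u N x), dist_add_left, ← Finset.sum_range_sub (u · x)]
  exact hN x hx

theorem hasFDerivAt_id_of_isBigO_pow {𝕜 E : Type*} [NontriviallyNormedField 𝕜]
    [NormedAddCommGroup E] [NormedSpace 𝕜 E] {T : E → E} {n : ℕ} (hn : 1 < n) (h0 : T 0 = 0)
    (hT : (fun v => T v - v) =O[𝓝 0] fun v => ‖v‖ ^ n) :
    HasFDerivAt T (ContinuousLinearMap.id 𝕜 E) 0 := by
  rw [hasFDerivAt_iff_isLittleO_nhds_zero]
  simpa [h0] using hT.trans_isLittleO (isLittleO_norm_pow_id hn)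

theorem norm_iterate_le_pow_mul {E : Type*} [SeminormedAddGroup E] {f : E → E} {s : Set E}
    {K : ℝ} (hK : 0 ≤ K) (hs : MapsTo f s s) (hf : ∀ x ∈ s, ‖f x‖ ≤ K * ‖x‖) {x : E}
    (hx : x ∈ s) (n : ℕ) : ‖f^[n] x‖ ≤ K ^ n * ‖x‖ := by
  induction n with
  | zero => simp
  | succ n ih =>
    rw [Function.iterate_succ_apply', pow_succ', mul_assoc]
    exact (hf _ (hs.iterate n hx)).trans (mul_le_mul_of_nonneg_left ih hK)

theorem mapsTo_ball_zero_of_norm_le_mul {E : Type*} [SeminormedAddGroup E] {f : E → E}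
    {K ρ : ℝ} (hK : K ≤ 1) (hf : ∀ x ∈ ball 0 ρ, ‖f x‖ ≤ K * ‖x‖) :
    MapsTo f (ball 0 ρ) (ball 0 ρ) := fun x hx => by
  rw [mem_ball_zero_iff] at hx ⊢
  exact ((hf x (mem_ball_zero_iff.mpr hx)).trans
    (mul_le_of_le_one_left (norm_nonneg x) hK)).trans_lt hx

section Renormalization

variable {𝕜 E : Type*} [NontriviallyNormedField 𝕜] [NormedAddCommGroup E] [NormedSpace 𝕜 E]
  {A : E ≃L[𝕜] E} {F : E → E}

theorem ContinuousLinearEquiv.norm_symm_apply_le {m : ℝ} (hm : 0 < m)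
    (hA : ∀ v, m * ‖v‖ ≤ ‖A v‖) (x : E) : ‖A.symm x‖ ≤ m⁻¹ * ‖x‖ :=
  (le_inv_mul_iff₀ hm).mpr (by simpa using hA (A.symm x))

def renormalizedIterate (A : E ≃L[𝕜] E) (F : E → E) (n : ℕ) (v : E) : E :=
  (⇑A.symm)^[n] (F^[n] v)

/-- The limit of `renormalizedIterate A F n`, written as a telescoping series; it is meaningful
only where the series converges. -/
noncomputable def renormalizedLimit (A : E ≃L[𝕜] E) (F : E → E) (v : E) : E :=
  v + ∑' n, (renormalizedIterate A F (n + 1) v - renormalizedIterate A F n v)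

theorem renormalizedIterate_succ_sub (n : ℕ) (v : E) :
    renormalizedIterate A F (n + 1) v - renormalizedIterate A F n v =
      (⇑A.symm)^[n + 1] (F (F^[n] v) - A (F^[n] v)) := by
  rw [iterate_map_sub, Function.iterate_succ_apply (⇑A.symm) n (A _), A.symm_apply_apply,
    renormalizedIterate, renormalizedIterate, Function.iterate_succ_apply' F]

theorem renormalizedIterate_apply_map (n : ℕ) (v : E) :
    renormalizedIterate A F n (F v) = A (renormalizedIterate A F (n + 1) v) := by
  rw [renormalizedIterate, renormalizedIterate, Function.iterate_succ_apply' (⇑A.symm),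
    A.apply_symm_apply, Function.iterate_succ_apply]

theorem differentiableOn_renormalizedIterate {s : Set E} (hF : DifferentiableOn 𝕜 F s)
    (hs : MapsTo F s s) (n : ℕ) : DifferentiableOn 𝕜 (renormalizedIterate A F n) s :=
  (A.symm.differentiable.iterate n).comp_differentiableOn (hF.iterate hs n)

theorem semiconj_apply_of_tendsto_renormalizedIterate {T : E → E} {v : E}
    (hv : Tendsto (renormalizedIterate A F · v) atTop (𝓝 (T v)))
    (hFv : Tendsto (renormalizedIterate A F · (F v)) atTop (𝓝 (T (F v)))) :
    T (F v) = A (T v) := by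
  refine tendsto_nhds_unique hFv ?_
  simp_rw [renormalizedIterate_apply_map]
  exact (A.continuous.tendsto _).comp (hv.comp (tendsto_add_atTop_nat 1))

structure IsTangentContraction (A : E ≃L[𝕜] E) (F : E → E) (m κ c ρ : ℝ) (q : ℕ) : Prop where
  m_pos : 0 < m
  mul_norm_le_norm_apply : ∀ v, m * ‖v‖ ≤ ‖A v‖
  κ_nonneg : 0 ≤ κ
  κ_le_one : κ ≤ 1
  pow_lt : κ ^ (q + 1) < m
  c_nonneg : 0 ≤ c
  ρ_pos : 0 < ρ
  norm_apply_le : ∀ v ∈ ball 0 ρ, ‖F v‖ ≤ κ * ‖v‖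
  norm_sub_le : ∀ v ∈ ball 0 ρ, ‖F v - A v‖ ≤ c * ‖v‖ ^ (q + 1)
  differentiableOn : DifferentiableOn 𝕜 F (ball 0 ρ)

namespace IsTangentContraction

variable {m κ c ρ : ℝ} {q : ℕ}

theorem mapsTo (h : IsTangentContraction A F m κ c ρ q) : MapsTo F (ball 0 ρ) (ball 0 ρ) :=
  mapsTo_ball_zero_of_norm_le_mul h.κ_le_one h.norm_apply_le

theorem map_zero (h : IsTangentContraction A F m κ c ρ q) : F 0 = 0 :=
  norm_le_zero_iff.mp (by simpa using h.norm_apply_le 0 (mem_ball_self h.ρ_pos))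

theorem ratio_nonneg (h : IsTangentContraction A F m κ c ρ q) : 0 ≤ κ ^ (q + 1) / m :=
  div_nonneg (pow_nonneg h.κ_nonneg _) h.m_pos.le

theorem ratio_lt_one (h : IsTangentContraction A F m κ c ρ q) : κ ^ (q + 1) / m < 1 :=
  (div_lt_one h.m_pos).mpr h.pow_lt

theorem norm_renormalizedIterate_succ_sub_le (h : IsTangentContraction A F m κ c ρ q) (n : ℕ)
    {v : E} (hv : v ∈ ball 0 ρ) :
    ‖renormalizedIterate A F (n + 1) v - renormalizedIterate A F n v‖ ≤
      c / m * (κ ^ (q + 1) / m) ^ n * ‖v‖ ^ (q + 1) := by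
  have hw : F^[n] v ∈ ball 0 ρ := h.mapsTo.iterate n hv
  have hFn : ‖F^[n] v‖ ≤ κ ^ n * ‖v‖ :=
    norm_iterate_le_pow_mul h.κ_nonneg h.mapsTo h.norm_apply_le hv n
  have hAn := norm_iterate_le_pow_mul (inv_nonneg.mpr h.m_pos.le) (mapsTo_univ _ _)
    (fun x _ => A.norm_symm_apply_le h.m_pos h.mul_norm_le_norm_apply x) (mem_univ
      (F (F^[n] v) - A (F^[n] v))) (n + 1)
  rw [renormalizedIterate_succ_sub]
  calc _ ≤ m⁻¹ ^ (n + 1) * (c * (κ ^ n * ‖v‖) ^ (q + 1)) := by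
        refine hAn.trans (mul_le_mul_of_nonneg_left ?_ (by positivity [h.m_pos.le]))
        exact (h.norm_sub_le _ hw).trans (mul_le_mul_of_nonneg_left
          (pow_le_pow_left₀ (norm_nonneg _) hFn _) h.c_nonneg)
    _ = c / m * (κ ^ (q + 1) / m) ^ n * ‖v‖ ^ (q + 1) := by ring

theorem exists_summable_norm_renormalizedIterate_succ_sub_le
    (h : IsTangentContraction A F m κ c ρ q) :
    ∃ a : ℕ → ℝ, Summable a ∧ ∀ n, ∀ v ∈ ball (0 : E) ρ,
      ‖renormalizedIterate A F (n + 1) v - renormalizedIterate A F n v‖ ≤ a n := by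
  refine ⟨fun n => c / m * (κ ^ (q + 1) / m) ^ n * ρ ^ (q + 1),
    ((summable_geometric_of_lt_one h.ratio_nonneg h.ratio_lt_one).mul_left _).mul_right _,
    fun n v hv => (h.norm_renormalizedIterate_succ_sub_le n hv).trans ?_⟩
  have := h.m_pos
  have := h.c_nonneg
  have := h.ratio_nonneg
  dsimp only
  gcongr
  exact (mem_ball_zero_iff.mp hv).le

theorem tendstoUniformlyOn [CompleteSpace E] (h : IsTangentContraction A F m κ c ρ q) :
    TendstoUniformlyOn (renormalizedIterate A F) (renormalizedLimit A F) atTop (ball 0 ρ) :=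
  let ⟨_, ha, hbound⟩ := h.exists_summable_norm_renormalizedIterate_succ_sub_le
  tendstoUniformlyOn_add_tsum_sub ha hbound

theorem renormalizedLimit_zero (h : IsTangentContraction A F m κ c ρ q) :
    renormalizedLimit A F 0 = 0 := by
  have hu : ∀ n, renormalizedIterate A F n 0 = 0 := fun n => by
    rw [renormalizedIterate, Function.iterate_fixed h.map_zero, iterate_map_zero]
  simp [renormalizedLimit, hu]

theorem norm_renormalizedLimit_sub_le (h : IsTangentContraction A F m κ c ρ q) :
    ∀ v ∈ ball (0 : E) ρ,
      ‖renormalizedLimit A F v - v‖ ≤ c / m * (1 - κ ^ (q + 1) / m)⁻¹ * ‖v‖ ^ (q + 1) := by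
  intro v hv
  rw [renormalizedLimit, add_sub_cancel_left]
  refine tsum_of_norm_bounded ?_ (h.norm_renormalizedIterate_succ_sub_le · hv)
  exact ((hasSum_geometric_of_lt_one h.ratio_nonneg h.ratio_lt_one).mul_left _).mul_right _

theorem hasFDerivAt_renormalizedLimit_zero (h : IsTangentContraction A F m κ c ρ q)
    (hq : 1 ≤ q) : HasFDerivAt (renormalizedLimit A F) (ContinuousLinearMap.id 𝕜 E) 0 := by
  refine hasFDerivAt_id_of_isBigO_pow (n := q + 1) (by omega) h.renormalizedLimit_zero
    (.of_bound (c / m * (1 - κ ^ (q + 1) / m)⁻¹) ?_)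
  filter_upwards [ball_mem_nhds 0 h.ρ_pos] with v hv
  simpa using h.norm_renormalizedLimit_sub_le v hv

theorem renormalizedLimit_apply_map [CompleteSpace E] (h : IsTangentContraction A F m κ c ρ q) :
    ∀ v ∈ ball (0 : E) ρ, renormalizedLimit A F (F v) = A (renormalizedLimit A F v) :=
  fun _ hv => semiconj_apply_of_tendsto_renormalizedIterate (h.tendstoUniformlyOn.tendsto_at hv)
    (h.tendstoUniformlyOn.tendsto_at (h.mapsTo hv))

end IsTangentContraction

end Renormalization

theorem IsTangentContraction.differentiableOn_renormalizedLimit {E : Type*}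
    [NormedAddCommGroup E] [NormedSpace ℂ E] [CompleteSpace E] {A : E ≃L[ℂ] E} {F : E → E}
    {m κ c ρ : ℝ} {q : ℕ} (h : IsTangentContraction A F m κ c ρ q) :
    DifferentiableOn ℂ (renormalizedLimit A F) (ball 0 ρ) := by
  obtain ⟨a, ha, hbound⟩ := h.exists_summable_norm_renormalizedIterate_succ_sub_le
  have hu := differentiableOn_renormalizedIterate (A := A) h.differentiableOn h.mapsTo
  exact differentiableOn_id.add (differentiableOn_tsum_of_summable_norm ha
    (fun n => (hu (n + 1)).sub (hu n)) isOpen_ball hbound)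

theorem exists_gt_lt_one_pow_lt {M m : ℝ} {n : ℕ} (hM : M < 1) (hMm : M ^ n < m) :
    ∃ κ, M < κ ∧ κ < 1 ∧ κ ^ n < m := by
  have h : ∀ᶠ κ in 𝓝 M, κ < 1 ∧ κ ^ n < m :=
    (eventually_lt_nhds hM).and (((continuous_pow n).tendsto M).eventually_lt_const hMm)
  obtain ⟨κ, ⟨hκ1, hκm⟩, hMκ⟩ :=
    ((h.filter_mono nhdsWithin_le_nhds).and (self_mem_nhdsWithin (s := Ioi M))).exists
  exact ⟨κ, hMκ, hκ1, hκm⟩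

theorem HasFPowerSeriesAt.isBigO_sub_pow_succ_of_coeff_eq_zero {𝕜 E G : Type*}
    [NontriviallyNormedField 𝕜] [NormedAddCommGroup E] [NormedSpace 𝕜 E] [NormedAddCommGroup G]
    [NormedSpace 𝕜 G] {f L : E → G} {p : FormalMultilinearSeries 𝕜 E G} {q : ℕ}
    (hf : HasFPowerSeriesAt f p 0) (hq : 1 ≤ q) (hp0 : p 0 = 0)
    (hp1 : ∀ v, p 1 (fun _ => v) = L v) (hp : ∀ n, 2 ≤ n → n ≤ q → p n = 0) :
    (fun v => f v - L v) =O[𝓝 0] fun v => ‖v‖ ^ (q + 1) := by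
  have hsum : ∀ v, p.partialSum (q + 1) v = L v := fun v => by
    rw [FormalMultilinearSeries.partialSum, Finset.sum_eq_single 1 ?_ (by simp; omega), hp1]
    rintro (_ | _ | n) hn hn1
    · simp [hp0]
    · exact absurd rfl hn1
    · simp [hp (n + 1 + 1) (by omega) (by simp at hn; omega)]
  simpa [hsum] using hf.isBigO_sub_partialSum_pow (q + 1)

theorem exists_isTangentContraction {𝕜 E : Type*} [NontriviallyNormedField 𝕜]
    [NormedAddCommGroup E] [NormedSpace 𝕜 E] {A : E ≃L[𝕜] E} {F : E → E} {m M r : ℝ} {q : ℕ}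
    (hm : 0 < m) (hmM : m ≤ M) (hM : M < 1) (hq : 1 ≤ q) (hres : M ^ (q + 1) < m)
    (hAm : ∀ v, m * ‖v‖ ≤ ‖A v‖) (hAM : ∀ v, ‖A v‖ ≤ M * ‖v‖) (hr : 0 < r)
    (hF : DifferentiableOn 𝕜 F (ball 0 r))
    (hFA : (fun v => F v - A v) =O[𝓝 0] fun v => ‖v‖ ^ (q + 1)) :
    ∃ κ c ρ, ρ ≤ r ∧ IsTangentContraction A F m κ c ρ q := by
  obtain ⟨κ, hMκ, hκ1, hκm⟩ := exists_gt_lt_one_pow_lt hM hres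
  obtain ⟨c, hc, hFAc⟩ := hFA.exists_nonneg
  have hFAsmall : ∀ᶠ v in 𝓝 0, ‖F v - A v‖ ≤ (κ - M) * ‖v‖ :=
    (hFA.trans_isLittleO (isLittleO_norm_pow_id (by omega))).bound (by linarith)
  obtain ⟨ρ, hρ, hball⟩ := Metric.eventually_nhds_iff_ball.mp (hFAc.bound.and hFAsmall)
  have hsub : ball (0 : E) (min ρ r) ⊆ ball 0 ρ := ball_subset_ball (min_le_left _ _)
  refine ⟨κ, c, min ρ r, min_le_right _ _,
    { m_pos := hm
      mul_norm_le_norm_apply := hAm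
      κ_nonneg := by linarith
      κ_le_one := hκ1.le
      pow_lt := hκm
      c_nonneg := hc
      ρ_pos := lt_min hρ hr
      norm_apply_le := fun v hv => ?_
      norm_sub_le := fun v hv => by simpa using (hball v (hsub hv)).1
      differentiableOn := hF.mono (ball_subset_ball (min_le_right _ _)) }⟩
  linarith [norm_le_norm_add_norm_sub' (F v) (A v), hAM v, (hball v (hsub hv)).2]

theorem high_tangency_conjugation_general {k : ℕ} (m M : ℝ) (q : ℕ)
    (hm : 0 < m) (hmM : m ≤ M) (hM : M < 1) (hq : 1 ≤ q) (hres : M ^ (q + 1) < m)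
    (A : EuclideanSpace ℂ (Fin k) ≃L[ℂ] EuclideanSpace ℂ (Fin k))
    (hA : ∀ v, m * ‖v‖ ≤ ‖A v‖ ∧ ‖A v‖ ≤ M * ‖v‖)
    (r : ℝ) (hr : 0 < r)
    (F : EuclideanSpace ℂ (Fin k) → EuclideanSpace ℂ (Fin k))
    (p : FormalMultilinearSeries ℂ (EuclideanSpace ℂ (Fin k)) (EuclideanSpace ℂ (Fin k)))
    (hF : HasFPowerSeriesOnBall F p 0 (ENNReal.ofReal r))
    (hp0 : p 0 = 0)
    (hp1 : ∀ v, p 1 (fun _ => v) = A v)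
    (htang : ∀ n, 2 ≤ n → n ≤ q → p n = 0) :
    ∃ ρ : ℝ, 0 < ρ ∧ ρ ≤ r ∧
      ∃ T : EuclideanSpace ℂ (Fin k) → EuclideanSpace ℂ (Fin k), ∃ C' : ℝ, 0 ≤ C' ∧
        TendstoUniformlyOn (fun n v => (⇑A.symm)^[n] (F^[n] v)) T atTop
          (ball (0 : EuclideanSpace ℂ (Fin k)) ρ) ∧
        DifferentiableOn ℂ T (ball 0 ρ) ∧
        T 0 = 0 ∧
        fderiv ℂ T 0 = ContinuousLinearMap.id ℂ (EuclideanSpace ℂ (Fin k)) ∧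
        (∀ v ∈ ball (0 : EuclideanSpace ℂ (Fin k)) ρ, T (F v) = A (T v)) ∧
        (∀ v ∈ ball (0 : EuclideanSpace ℂ (Fin k)) ρ, ‖T v - v‖ ≤ C' * ‖v‖ ^ (q + 1)) := by
  obtain ⟨κ, c, ρ, hρr, h⟩ := exists_isTangentContraction hm hmM hM hq hres (fun v => (hA v).1)
    (fun v => (hA v).2) hr (by simpa only [Metric.eball_ofReal] using hF.differentiableOn)
    (hF.hasFPowerSeriesAt.isBigO_sub_pow_succ_of_coeff_eq_zero hq hp0 hp1 htang)
  have hC' : 0 ≤ c / m * (1 - κ ^ (q + 1) / m)⁻¹ :=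
    mul_nonneg (div_nonneg h.c_nonneg h.m_pos.le)
      (inv_nonneg.mpr (sub_nonneg.mpr h.ratio_lt_one.le))
  exact ⟨ρ, h.ρ_pos, hρr, renormalizedLimit A F, _, hC', h.tendstoUniformlyOn,
    h.differentiableOn_renormalizedLimit, h.renormalizedLimit_zero,
    (h.hasFDerivAt_renormalizedLimit_zero hq).fderiv, h.renormalizedLimit_apply_map,
    h.norm_renormalizedLimit_sub_le⟩

/-- Autonomous high-tangency conjugation theorem: if `F` is holomorphic near `0 ∈ ℂ^k`
with `F(0) = 0`, tangent at order `q+1` to an invertible linear map `A` satisfying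
`m‖v‖ ≤ ‖Av‖ ≤ M‖v‖` with `0 < m ≤ M < 1` and `M^{q+1} < m`, and has Taylor
coefficients bounded by `C`, then `T_n := A^{-n} ∘ F^n` converges uniformly on a small
ball to a holomorphic `T` with `T 0 = 0`, `d₀T = Id`, `T ∘ F = A ∘ T` near `0`, and
`‖T v − v‖ ≤ C' ‖v‖^{q+1}`. -/
theorem high_tangency_conjugation {k : ℕ} (m M : ℝ) (q : ℕ)
    (hm : 0 < m) (hmM : m ≤ M) (hM : M < 1) (hq : 1 ≤ q) (hres : M ^ (q + 1) < m)
    (A : EuclideanSpace ℂ (Fin k) ≃L[ℂ] EuclideanSpace ℂ (Fin k))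
    (hA : ∀ v, m * ‖v‖ ≤ ‖A v‖ ∧ ‖A v‖ ≤ M * ‖v‖)
    (r C : ℝ) (hr : 0 < r) (hC : 0 ≤ C)
    (F : EuclideanSpace ℂ (Fin k) → EuclideanSpace ℂ (Fin k))
    (p : FormalMultilinearSeries ℂ (EuclideanSpace ℂ (Fin k)) (EuclideanSpace ℂ (Fin k)))
    (hF : HasFPowerSeriesOnBall F p 0 (ENNReal.ofReal r))
    (hp0 : p 0 = 0)
    (hp1 : ∀ v, p 1 (fun _ => v) = A v)
    (htang : ∀ n, 2 ≤ n → n ≤ q → p n = 0)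
    (hcoef : ∀ n, ‖p n‖ ≤ C) :
    ∃ ρ : ℝ, 0 < ρ ∧ ρ ≤ r ∧
      ∃ T : EuclideanSpace ℂ (Fin k) → EuclideanSpace ℂ (Fin k), ∃ C' : ℝ, 0 ≤ C' ∧
        TendstoUniformlyOn (fun n v => (⇑A.symm)^[n] (F^[n] v)) T atTop
          (ball (0 : EuclideanSpace ℂ (Fin k)) ρ) ∧
        DifferentiableOn ℂ T (ball 0 ρ) ∧
        T 0 = 0 ∧
        fderiv ℂ T 0 = ContinuousLinearMap.id ℂ (EuclideanSpace ℂ (Fin k)) ∧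
        (∀ v ∈ ball (0 : EuclideanSpace ℂ (Fin k)) ρ, T (F v) = A (T v)) ∧
        (∀ v ∈ ball (0 : EuclideanSpace ℂ (Fin k)) ρ, ‖T v - v‖ ≤ C' * ‖v‖ ^ (q + 1)) :=
  high_tangency_conjugation_general m M q hm hmM hM hq hres A hA r hr F p hF hp0 hp1 htang
end

section
/- Let K : B(0,r) ⊂ ℂ^k → ℂ^k be holomorphic with K(0)=0, let D = d_0 K be its differential at 0, and suppose the second derivatives of K are bounded by B on B(0,r/2). Suppose a|v| ≤ |D v| ≤ b|v| for all v, for some 0 < a ≤ b. Then for any γ > 0, on the ball of radius ρ := min{r/2, (e^γ − 1)b/(cB), (1 − e^{-γ})a/(cB)} (for a dimensional constant c), one has for all u, v in B(0,ρ): a e^{-γ} |u − v| ≤ |K(u) − K(v)| ≤ b e^{γ} |u − v|. -/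
/-!
On `B(0, r/2)` the bound on the second derivative and the mean value inequality give
`‖d_x K - d_0 K‖ ≤ B ‖x‖`, so on `B(0, ρ)` the map `K - d_0 K` is `Bρ`-Lipschitz. With `c = 1`
the choice of `ρ` gives `Bρ ≤ (e^γ - 1) b` and `Bρ ≤ (1 - e^{-γ}) a`, which turns
`a ≤ ‖d_0 K‖ ≤ b` into the two estimates.

The bound on `iteratedFDeriv ℂ 2 K` only carries information once `fderiv ℂ K` is known to be
differentiable. For holomorphic `K` this comes from the Cauchy integral formula
`2πi · d_x K w = ∮ K(x + z w) / z² dz`, differentiated in `x` under the integral sign, with the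
Cauchy estimate for `‖d K‖` as dominating bound.
-/

open Metric Set
open scoped Real

theorem hasDerivAt_comp_add_smul {𝕜 E F : Type*} [NontriviallyNormedField 𝕜]
    [NormedAddCommGroup E] [NormedSpace 𝕜 E] [NormedAddCommGroup F] [NormedSpace 𝕜 F]
    {f : E → F} {x w : E} {z : 𝕜} (hf : DifferentiableAt 𝕜 f (x + z • w)) :
    HasDerivAt (fun ζ : 𝕜 => f (x + ζ • w)) (fderiv 𝕜 f (x + z • w) w) z :=
  hf.hasFDerivAt.comp_hasDerivAt z <| by
    simpa using ((hasDerivAt_id z).smul_const w).const_add x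

theorem differentiableAt_intervalIntegral_smul_comp_add {𝕜 E F : Type*} [RCLike 𝕜]
    [NormedAddCommGroup E] [NormedSpace 𝕜 E] [FiniteDimensional 𝕜 E]
    [NormedAddCommGroup F] [NormedSpace ℝ F] [NormedSpace 𝕜 F] [FiniteDimensional 𝕜 F]
    {f : E → F} {a : ℝ → 𝕜} {γ : ℝ → E} {x₀ : E} {δ C α β : ℝ}
    (ha : Continuous a) (hγ : Continuous γ) (hδ : 0 < δ)
    (hf : ∀ x ∈ ball x₀ δ, ∀ θ, DifferentiableAt 𝕜 f (x + γ θ))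
    (hC : ∀ x ∈ ball x₀ δ, ∀ θ, ‖fderiv 𝕜 f (x + γ θ)‖ ≤ C) :
    DifferentiableAt 𝕜 (fun x => ∫ θ in α..β, a θ • f (x + γ θ)) x₀ := by
  borelize E (E →L[𝕜] F)
  have : ProperSpace (E →L[𝕜] F) := FiniteDimensional.proper 𝕜 _
  have : CompleteSpace F := FiniteDimensional.complete 𝕜 F
  have hcont : ∀ x ∈ ball x₀ δ, Continuous fun θ => a θ • f (x + γ θ) := fun x hx =>
    ha.smul <| continuous_iff_continuousAt.2 fun θ =>
      (hf x hx θ).continuousAt.comp (continuous_const_add x).continuousAt |>.comp hγ.continuousAt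
  refine (intervalIntegral.hasFDerivAt_integral_of_dominated_of_fderiv_le
    (F' := fun x θ => a θ • fderiv 𝕜 f (x + γ θ)) (bound := fun θ => ‖a θ‖ * C)
    (ball_mem_nhds x₀ hδ) ?_ ((hcont x₀ (mem_ball_self hδ)).intervalIntegrable _ _) ?_ ?_
    ((ha.norm.mul continuous_const).intervalIntegrable _ _) ?_).differentiableAt
  · filter_upwards [ball_mem_nhds x₀ hδ] with x hx using (hcont x hx).aestronglyMeasurable
  · exact ha.aestronglyMeasurable.smul
      ((measurable_fderiv 𝕜 f).comp (continuous_const.add hγ).measurable).aestronglyMeasurable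
  · refine Filter.Eventually.of_forall fun θ _ x hx => ?_
    rw [norm_smul]
    exact mul_le_mul_of_nonneg_left (hC x hx θ) (norm_nonneg _)
  · exact Filter.Eventually.of_forall fun θ _ x hx =>
      ((hasFDerivAt_comp_add_right (γ θ)).2 (hf x hx θ).hasFDerivAt).const_smul (a θ)

theorem differentiableOn_clm_of_forall_apply {𝕜 D E F : Type*} [NontriviallyNormedField 𝕜]
    [CompleteSpace 𝕜] [NormedAddCommGroup D] [NormedSpace 𝕜 D] [NormedAddCommGroup E]
    [NormedSpace 𝕜 E] [FiniteDimensional 𝕜 E] [NormedAddCommGroup F] [NormedSpace 𝕜 F]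
    {f : D → E →L[𝕜] F} {s : Set D} (h : ∀ y, DifferentiableOn 𝕜 (fun x => f x y) s) :
    DifferentiableOn 𝕜 f s := by
  have hd : Module.finrank 𝕜 E = Module.finrank 𝕜 (Fin (Module.finrank 𝕜 E) → 𝕜) :=
    (Module.finrank_fin_fun 𝕜).symm
  let e := ((ContinuousLinearEquiv.ofFinrankEq hd).arrowCongr (1 : F ≃L[𝕜] F)).trans
    (ContinuousLinearEquiv.piRing (Fin (Module.finrank 𝕜 E)))
  rw [← Function.id_comp f, ← e.symm_comp_self]
  exact e.symm.differentiable.comp_differentiableOn (differentiableOn_pi.2 fun i => h _)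

theorem Convex.norm_fderiv_sub_le_of_norm_iteratedFDeriv_two_le {𝕜 E F : Type*}
    [NontriviallyNormedField 𝕜] [IsRCLikeNormedField 𝕜]
    [NormedAddCommGroup E] [NormedSpace ℝ E] [NormedSpace 𝕜 E]
    [NormedAddCommGroup F] [NormedSpace 𝕜 F]
    {f : E → F} {s : Set E} {B : ℝ} {x y : E} (hs : Convex ℝ s)
    (hf : ∀ t ∈ s, DifferentiableAt 𝕜 (fderiv 𝕜 f) t)
    (hB : ∀ t ∈ s, ‖iteratedFDeriv 𝕜 2 f t‖ ≤ B) (hx : x ∈ s) (hy : y ∈ s) :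
    ‖fderiv 𝕜 f y - fderiv 𝕜 f x‖ ≤ B * ‖y - x‖ :=
  hs.norm_image_sub_le_of_norm_fderiv_le hf (fun t ht => by
    rw [← norm_iteratedFDeriv_one, norm_iteratedFDeriv_fderiv]
    exact hB t ht) hx hy

section Holomorphic

variable {E F : Type*} [NormedAddCommGroup E] [NormedSpace ℂ E]
  [NormedAddCommGroup F] [NormedSpace ℂ F] {f : E → F}

theorem norm_fderiv_le_of_forall_norm_le {p : E} {d M : ℝ} (hd : 0 < d)
    (hf : DifferentiableOn ℂ f (closedBall p d)) (hM : ∀ y ∈ closedBall p d, ‖f y‖ ≤ M) :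
    ‖fderiv ℂ f p‖ ≤ M / d := by
  have hM₀ : 0 ≤ M := (norm_nonneg _).trans (hM p (mem_closedBall_self hd.le))
  refine ContinuousLinearMap.opNorm_le_of_unit_norm (by positivity) fun v hv => ?_
  have hmaps : MapsTo (fun z : ℂ => p + z • v) (closedBall 0 d) (closedBall p d) := fun z hz => by
    simpa [norm_smul, hv] using hz
  have hslice : DifferentiableOn ℂ (fun z : ℂ => f (p + z • v)) (closedBall 0 d) :=
    hf.comp ((differentiable_const p).add (differentiable_id.smul_const v)).differentiableOn hmaps
  have hderiv : deriv (fun z : ℂ => f (p + z • v)) 0 = fderiv ℂ f p v := by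
    simpa using (hasDerivAt_comp_add_smul (x := p) (w := v) (z := (0 : ℂ))
      (by simpa using hf.differentiableAt (closedBall_mem_nhds p hd))).deriv
  rw [← hderiv]
  exact Complex.norm_deriv_le_of_forall_mem_sphere_norm_le hd (hslice.diffContOnCl_ball subset_rfl)
    fun z hz => hM _ (hmaps (sphere_subset_closedBall hz))

theorem fderiv_apply_eq_circleIntegral [CompleteSpace F] {x w : E} {R : ℝ} (hR : 0 < R)
    (hf : ∀ z ∈ closedBall (0 : ℂ) R, DifferentiableAt ℂ f (x + z • w)) :
    (2 * π * Complex.I) • fderiv ℂ f x w = ∮ z in C(0, R), (1 / z ^ 2) • f (x + z • w) := by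
  have hslice : DifferentiableOn ℂ (fun z : ℂ => f (x + z • w)) (closedBall 0 R) := fun z hz =>
    (hasDerivAt_comp_add_smul (hf z hz)).differentiableAt.differentiableWithinAt
  have hderiv : deriv (fun z : ℂ => f (x + z • w)) 0 = fderiv ℂ f x w := by
    simpa using (hasDerivAt_comp_add_smul (z := 0) (hf 0 (mem_closedBall_self hR.le))).deriv
  simpa [hderiv] using (hslice.deriv_eq_smul_circleIntegral hR).symm

theorem DifferentiableOn.differentiableOn_fderiv_apply [FiniteDimensional ℂ E]
    [FiniteDimensional ℂ F] {s : Set E} (hf : DifferentiableOn ℂ f s) (hs : IsOpen s) (w : E) :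
    DifferentiableOn ℂ (fun x => fderiv ℂ f x w) s := by
  intro x₀ hx₀
  obtain ⟨δ, hδ, hsub⟩ : ∃ δ > 0, closedBall x₀ (3 * δ) ⊆ s := by
    obtain ⟨ε, hε, hball⟩ := Metric.isOpen_iff.1 hs x₀ hx₀
    exact ⟨ε / 4, by positivity, (closedBall_subset_ball (by linarith)).trans hball⟩
  obtain ⟨M, hM⟩ := (isCompact_closedBall x₀ (3 * δ)).exists_bound_of_continuousOn
    (hf.continuousOn.mono hsub)
  have hCauchy : ∀ y ∈ closedBall x₀ (2 * δ), ‖fderiv ℂ f y‖ ≤ M / δ := by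
    intro y hy
    have hy' : closedBall y δ ⊆ closedBall x₀ (3 * δ) :=
      closedBall_subset_closedBall' (by rw [mem_closedBall] at hy; linarith)
    exact norm_fderiv_le_of_forall_norm_le hδ (hf.mono (hy'.trans hsub)) fun z hz => hM z (hy' hz)
  have hdiff : ∀ y ∈ closedBall x₀ (2 * δ), DifferentiableAt ℂ f y := fun y hy =>
    hf.differentiableAt (hs.mem_nhds (hsub (closedBall_subset_closedBall (by linarith) hy)))
  set R := δ / (‖w‖ + 1) with hR_def
  have hR : 0 < R := by positivity
  have hnear : ∀ x ∈ ball x₀ δ, ∀ z : ℂ, ‖z‖ ≤ R → x + z • w ∈ closedBall x₀ (2 * δ) := by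
    intro x hx z hz
    have hRw : R * ‖w‖ ≤ δ := by
      rw [hR_def, div_mul_eq_mul_div, div_le_iff₀ (by positivity)]
      nlinarith [norm_nonneg w]
    rw [mem_closedBall, dist_eq_norm, add_sub_right_comm]
    calc ‖x - x₀ + z • w‖ ≤ ‖x - x₀‖ + ‖z‖ * ‖w‖ := (norm_add_le _ _).trans_eq (by rw [norm_smul])
      _ ≤ δ + R * ‖w‖ := add_le_add (mem_ball_iff_norm.1 hx).le (by gcongr)
      _ ≤ 2 * δ := by linarith
  have hcircle : ∀ θ : ℝ, ‖circleMap 0 R θ‖ ≤ R := fun θ => by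
    rw [norm_circleMap_zero, abs_of_pos hR]
  have hrep : ∀ x ∈ ball x₀ δ, fderiv ℂ f x w = (2 * π * Complex.I)⁻¹ •
      ∫ θ in 0..2 * π, (Complex.I * (circleMap 0 R θ)⁻¹) • f (x + circleMap 0 R θ • w) := by
    intro x hx
    rw [eq_inv_smul_iff₀ Complex.two_pi_I_ne_zero, fderiv_apply_eq_circleIntegral hR
      fun z hz => hdiff _ (hnear x hx z (mem_closedBall_zero_iff.1 hz)), circleIntegral]
    refine intervalIntegral.integral_congr fun θ _ => ?_
    have hne : circleMap 0 R θ ≠ 0 := circleMap_ne_center hR.ne'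
    simp only [smul_smul, deriv_circleMap]
    congr 1
    field_simp
  have hint := differentiableAt_intervalIntegral_smul_comp_add (α := 0) (β := 2 * π)
    (a := fun θ => Complex.I * (circleMap 0 R θ)⁻¹) (γ := fun θ => circleMap 0 R θ • w)
    (continuous_const.mul ((continuous_circleMap 0 R).inv₀ fun θ => circleMap_ne_center hR.ne'))
    ((continuous_circleMap 0 R).smul continuous_const) hδ
    (fun x hx θ => hdiff _ (hnear x hx _ (hcircle θ)))
    (fun x hx θ => hCauchy _ (hnear x hx _ (hcircle θ)))
  exact ((hint.const_smul _).congr_of_eventuallyEq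
    (Filter.eventually_of_mem (ball_mem_nhds x₀ hδ) hrep)).differentiableWithinAt

theorem DifferentiableOn.differentiableOn_fderiv [FiniteDimensional ℂ E] [FiniteDimensional ℂ F]
    {s : Set E} (hf : DifferentiableOn ℂ f s) (hs : IsOpen s) :
    DifferentiableOn ℂ (fderiv ℂ f) s :=
  differentiableOn_clm_of_forall_apply (hf.differentiableOn_fderiv_apply hs)

end Holomorphic

/-- Quantitative bi-Lipschitz estimate: there is a dimensional constant `c > 0` such
that for any holomorphic `K : B(0,r) ⊂ ℂ^k → ℂ^k` with `K 0 = 0`, differential `D` at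
`0` satisfying `a‖v‖ ≤ ‖Dv‖ ≤ b‖v‖`, and second derivatives bounded by `B` on
`B(0,r/2)`, one has on the ball of radius
`ρ = min(r/2, (e^γ−1)b/(cB), (1−e^{−γ})a/(cB))` the estimates
`a e^{−γ} ‖u−v‖ ≤ ‖K u − K v‖ ≤ b e^{γ} ‖u−v‖`. -/
theorem bilipschitz_estimate (k : ℕ) :
    ∃ c : ℝ, 0 < c ∧
      ∀ (r B a b γ : ℝ) (K : EuclideanSpace ℂ (Fin k) → EuclideanSpace ℂ (Fin k)),
        0 < r → 0 < B → 0 < a → a ≤ b → 0 < γ →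
        DifferentiableOn ℂ K (ball 0 r) → K 0 = 0 →
        (∀ v, a * ‖v‖ ≤ ‖fderiv ℂ K 0 v‖ ∧ ‖fderiv ℂ K 0 v‖ ≤ b * ‖v‖) →
        (∀ t ∈ ball (0 : EuclideanSpace ℂ (Fin k)) (r / 2), ‖iteratedFDeriv ℂ 2 K t‖ ≤ B) →
        ∀ u ∈ ball (0 : EuclideanSpace ℂ (Fin k))
            (min (r / 2) (min ((Real.exp γ - 1) * b / (c * B))
              ((1 - Real.exp (-γ)) * a / (c * B)))),
          ∀ v ∈ ball (0 : EuclideanSpace ℂ (Fin k))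
            (min (r / 2) (min ((Real.exp γ - 1) * b / (c * B))
              ((1 - Real.exp (-γ)) * a / (c * B)))),
            a * Real.exp (-γ) * ‖u - v‖ ≤ ‖K u - K v‖ ∧
            ‖K u - K v‖ ≤ b * Real.exp γ * ‖u - v‖ := by
  refine ⟨1, one_pos, fun r B a b γ K hr hB _ _ _ hK _ hD hK₂ u hu v hv => ?_⟩
  set ρ := min (r / 2) (min ((Real.exp γ - 1) * b / (1 * B)) ((1 - Real.exp (-γ)) * a / (1 * B)))
  have hρ : ball (0 : EuclideanSpace ℂ (Fin k)) ρ ⊆ ball 0 (r / 2) :=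
    ball_subset_ball (min_le_left _ _)
  have hr₂ : ball (0 : EuclideanSpace ℂ (Fin k)) (r / 2) ⊆ ball 0 r := ball_subset_ball (by linarith)
  have hBρ₁ : B * ρ ≤ (Real.exp γ - 1) * b := by
    rw [← le_div_iff₀' hB, ← one_mul B]; exact (min_le_right _ _).trans (min_le_left _ _)
  have hBρ₂ : B * ρ ≤ (1 - Real.exp (-γ)) * a := by
    rw [← le_div_iff₀' hB, ← one_mul B]; exact (min_le_right _ _).trans (min_le_right _ _)
  have hK₁ := hK.differentiableOn_fderiv isOpen_ball
  have hdK : ∀ x ∈ ball (0 : EuclideanSpace ℂ (Fin k)) ρ,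
      ‖fderiv ℂ K x - fderiv ℂ K 0‖ ≤ B * ρ := fun x hx => by
    have := (convex_ball 0 (r / 2)).norm_fderiv_sub_le_of_norm_iteratedFDeriv_two_le
      (fun t ht => hK₁.differentiableAt (isOpen_ball.mem_nhds (hr₂ ht)))
      hK₂ (mem_ball_self (by positivity)) (hρ hx)
    rw [sub_zero] at this
    exact this.trans (by gcongr; exact (mem_ball_zero_iff.1 hx).le)
  have hlin : ‖K u - K v - fderiv ℂ K 0 (u - v)‖ ≤ B * ρ * ‖u - v‖ :=
    (convex_ball 0 ρ).norm_image_sub_le_of_norm_fderiv_le'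
      (fun x hx => hK.differentiableAt (isOpen_ball.mem_nhds (hr₂ (hρ hx)))) hdK hv hu
  have hlow := norm_le_norm_add_norm_sub (K u - K v) (fderiv ℂ K 0 (u - v))
  have hupp := norm_le_norm_add_norm_sub' (K u - K v) (fderiv ℂ K 0 (u - v))
  have hε₁ := mul_le_mul_of_nonneg_right hBρ₁ (norm_nonneg (u - v))
  have hε₂ := mul_le_mul_of_nonneg_right hBρ₂ (norm_nonneg (u - v))
  obtain ⟨hDa, hDb⟩ := hD (u - v)
  constructor <;> linarith
end
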